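/- Let (X,d) be a compact metric space, T a homeomorphism, and μ a T-invariant regular Borel probability measure. Suppose that for every finite measurable partition α = {A₁,…,A_l} of X and every ε>0 there exist finitely many measurable sets B₁,…,B_k with μ(⋃B_i) > 1−ε such that H_n^α(x,y) < ε for all n ≥ 1 whenever x,y lie in a common B_i, where H_n^α(x,y) = (1/n)#{0≤i≤n−1 : Tⁱx and Tⁱy lie in different cells of α}. Then (X,T) is μ-equicontinuous in the mean: for every τ>0 there is a compact K with μ(K)>1−τ and for every ε>0 a δ>0 such that (1/n)∑_{i=0}^{n−1} d(Tⁱx,Tⁱy) < ε for all n whenever x,y∈K with d(x,y)<δ. -/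

import Mathlib

open MeasureTheory Filter Metric Set

/-- Hamming average `H_n^α(x,y)`: fraction of times `0 ≤ i < n` at which `Tⁱx` and `Tⁱy`
lie in different cells of the partition `A`. -/
noncomputable def ham {X : Type*} (T : X → X) {l : ℕ} (A : Fin l → Set X)
    (n : ℕ) (x y : X) : ℝ :=
  (∑ i ∈ Finset.range n,
    ((⋃ j, A j ×ˢ A j)ᶜ : Set (X × X)).indicator (fun _ => (1 : ℝ)) (T^[i] x, T^[i] y)) / n

open Function
open scoped ENNReal Topology

/-!
Partition `X` into finitely many measurable cells of diameter `< η / 3` and apply the hypothesis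
to it. If `x` and `y` lie in a common `B i`, their orbits visit different cells at a fraction
`< e` of the times, so their mean orbit distance is at most `diam X * e + η / 3`. Making the `B i`
disjoint and shrinking them to compact sets by inner regularity, two close enough points of the
union `K` of these compact sets lie in the same `B i`, since disjoint compact sets are at positive
distance. Intersecting such `K` for `η = 1 / (m + 1)`, with measure defects summing to less than
`τ`, gives the required compact set.
-/

theorem measurableSet_disjointed {α ι : Type*} [MeasurableSpace α] [Preorder ι]
    [LocallyFiniteOrderBot ι] {f : ι → Set α} (h : ∀ i, MeasurableSet (f i)) (i : ι) :
    MeasurableSet (disjointed f i) :=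
  disjointedRec (fun _ _ ht => ht.diff (h _)) (h i)

theorem exists_isCompact_measure_compl_lt_forall {X : Type*} [TopologicalSpace X] [T2Space X]
    [MeasurableSpace X] (μ : Measure X) (P : ℕ → Set X → Prop)
    (hP_mono : ∀ m K K', K' ⊆ K → P m K → P m K')
    (hP : ∀ m, ∀ ε : ℝ≥0∞, ε ≠ 0 → ∃ K, IsCompact K ∧ μ Kᶜ ≤ ε ∧ P m K)
    {ε : ℝ≥0∞} (hε : ε ≠ 0) : ∃ K, IsCompact K ∧ μ Kᶜ < ε ∧ ∀ m, P m K := by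
  obtain ⟨ε', hε'0, hε'⟩ := ENNReal.exists_pos_sum_of_countable hε ℕ
  choose K hK hμK hPK using fun m => hP m (ε' m) (ENNReal.coe_ne_zero.2 (hε'0 m).ne')
  refine ⟨⋂ m, K m, (hK 0).of_isClosed_subset (isClosed_iInter fun m => (hK m).isClosed)
    (iInter_subset K 0), ?_, fun m => hP_mono m _ _ (iInter_subset K m) (hPK m)⟩
  calc μ (⋂ m, K m)ᶜ = μ (⋃ m, (K m)ᶜ) := by rw [compl_iInter]
    _ ≤ ∑' m, μ (K m)ᶜ := measure_iUnion_le _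
    _ ≤ ∑' m, (ε' m : ℝ≥0∞) := ENNReal.tsum_le_tsum hμK
    _ < ε := hε'

section MetricSpace

variable {X : Type*} [MetricSpace X]

theorem Disjoint.exists_pos_forall_lt_dist {s t : Set X} (hst : Disjoint s t)
    (hs : IsCompact s) (ht : IsClosed t) : ∃ r > 0, ∀ x ∈ s, ∀ y ∈ t, r < dist x y := by
  obtain ⟨r, hr, h⟩ := exists_pos_forall_lt_edist hs ht hst
  refine ⟨r, hr, fun x hx y hy => ?_⟩
  have := h x hx y hy
  rw [← ENNReal.ofReal_coe_nnreal] at this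
  exact lt_of_not_ge fun hle => this.not_ge ((edist_le_ofReal r.coe_nonneg).2 hle)

theorem exists_pos_forall_dist_lt_imp_eq {ι : Type*} [Finite ι] {C : ι → Set X}
    (hC : ∀ i, IsCompact (C i)) (hd : Pairwise (Disjoint on C)) :
    ∃ δ > 0, ∀ i j, ∀ x ∈ C i, ∀ y ∈ C j, dist x y < δ → i = j := by
  have hpair : ∀ i j, ∀ᶠ δ in 𝓝[>] (0 : ℝ), ∀ x ∈ C i, ∀ y ∈ C j, dist x y < δ → i = j := by
    intro i j
    by_cases hij : i = j
    · exact Eventually.of_forall fun _ _ _ _ _ _ => hij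
    obtain ⟨r, hr, hsep⟩ := (hd hij).exists_pos_forall_lt_dist (hC i) (hC j).isClosed
    filter_upwards [nhdsWithin_le_nhds (eventually_lt_nhds hr)] with δ hδ x hx y hy hxy
    exact absurd (hsep x hx y hy) (hxy.trans hδ).not_gt
  simp only [← eventually_all] at hpair
  exact (hpair.and self_mem_nhdsWithin).exists.imp fun δ h => ⟨h.2, h.1⟩

theorem exists_measurable_partition_forall_dist_lt [CompactSpace X] [MeasurableSpace X]
    [OpensMeasurableSpace X] {r : ℝ} (hr : 0 < r) :
    ∃ (l : ℕ) (A : Fin l → Set X), (∀ j, MeasurableSet (A j)) ∧ Pairwise (Disjoint on A) ∧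
      (⋃ j, A j) = univ ∧ ∀ j, ∀ x ∈ A j, ∀ y ∈ A j, dist x y < r := by
  obtain ⟨t, -, ht, hcover⟩ := finite_cover_balls_of_compact (isCompact_univ (X := X)) (half_pos hr)
  obtain ⟨l, c, rfl⟩ := ht.fin_embedding
  refine ⟨l, disjointed fun j => ball (c j) (r / 2),
    measurableSet_disjointed fun _ => measurableSet_ball, disjoint_disjointed _, ?_, ?_⟩
  · rw [iUnion_disjointed, eq_univ_iff_forall]
    simpa only [biUnion_range, univ_subset_iff, eq_univ_iff_forall] using hcover
  · intro j x hx y hy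
    have hx' := mem_ball.1 (disjointed_subset _ j hx)
    have hy' := mem_ball.1 (disjointed_subset _ j hy)
    linarith [dist_triangle_right x y (c j)]

theorem exists_isCompact_forall_dist_lt_exists_mem [MeasurableSpace X] [OpensMeasurableSpace X]
    (μ : Measure X) [IsFiniteMeasure μ] [μ.InnerRegularCompactLTTop] {k : ℕ}
    {B : Fin k → Set X} (hB : ∀ i, MeasurableSet (B i)) {ε : ℝ≥0∞} (hε : ε ≠ 0) :
    ∃ K, IsCompact K ∧ μ ((⋃ i, B i) \ K) ≤ ε ∧
      ∃ δ > 0, ∀ x ∈ K, ∀ y ∈ K, dist x y < δ → ∃ i, x ∈ B i ∧ y ∈ B i := by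
  have hεk : ε / k ≠ 0 := ENNReal.div_ne_zero.2 ⟨hε, ENNReal.natCast_ne_top k⟩
  choose C hCB hC hμC using fun i =>
    (measurableSet_disjointed hB i).exists_isCompact_sdiff_lt (measure_ne_top μ _) hεk
  obtain ⟨δ, hδ, hsep⟩ := exists_pos_forall_dist_lt_imp_eq hC
    ((disjoint_disjointed B).mono fun i j h => h.mono (hCB i) (hCB j))
  refine ⟨⋃ i, C i, isCompact_iUnion hC, ?_, δ, hδ, ?_⟩
  · have hsub : (⋃ i, B i) \ ⋃ i, C i ⊆ ⋃ i, disjointed B i \ C i := by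
      rw [← iUnion_disjointed]
      rintro x ⟨hx, hxC⟩
      obtain ⟨i, hi⟩ := mem_iUnion.1 hx
      exact mem_iUnion.2 ⟨i, hi, fun h => hxC (mem_iUnion.2 ⟨i, h⟩)⟩
    calc μ ((⋃ i, B i) \ ⋃ i, C i) ≤ ∑ i, μ (disjointed B i \ C i) :=
          (measure_mono hsub).trans (measure_iUnion_fintype_le μ _)
      _ ≤ ∑ _i : Fin k, ε / k := Finset.sum_le_sum fun i _ => (hμC i).le
      _ ≤ ε := by simpa using ENNReal.mul_div_le
  · rintro x hx y hy hxy
    obtain ⟨i, hxi⟩ := mem_iUnion.1 hx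
    obtain ⟨j, hyj⟩ := mem_iUnion.1 hy
    obtain rfl := hsep i j x hxi y hyj hxy
    exact ⟨i, disjointed_subset B i (hCB i hxi), disjointed_subset B i (hCB i hyj)⟩

theorem div_sum_dist_iterate_le (T : X → X) {l : ℕ} (A : Fin l → Set X) {r D : ℝ} (hr : 0 ≤ r)
    (hA : ∀ j, ∀ x ∈ A j, ∀ y ∈ A j, dist x y ≤ r) (hD : ∀ x y : X, dist x y ≤ D)
    (n : ℕ) (x y : X) :
    (∑ i ∈ Finset.range n, dist (T^[i] x) (T^[i] y)) / n ≤ D * ham T A n x y + r := by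
  set S : Set (X × X) := (⋃ j, A j ×ˢ A j)ᶜ
  have hpt : ∀ a b : X, dist a b ≤ D * S.indicator (fun _ => 1) (a, b) + r := by
    intro a b
    by_cases hab : (a, b) ∈ S
    · rw [indicator_of_mem hab]
      linarith [hD a b]
    · obtain ⟨j, ha, hb⟩ := mem_iUnion.1 (not_not.1 hab)
      rw [indicator_of_notMem hab]
      linarith [hA j a ha b hb]
  rcases n.eq_zero_or_pos with rfl | hn
  · simp [ham, hr]
  have hsum := Finset.sum_le_sum fun i (_ : i ∈ Finset.range n) => hpt (T^[i] x) (T^[i] y)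
  rw [Finset.sum_add_distrib, ← Finset.mul_sum, Finset.sum_const, Finset.card_range,
    nsmul_eq_mul] at hsum
  rw [ham, div_le_iff₀ (by positivity)]
  exact hsum.trans_eq (by field_simp; rfl)

theorem exists_isCompact_ham_lt [MeasurableSpace X] [OpensMeasurableSpace X]
    (μ : Measure X) [IsProbabilityMeasure μ] [μ.InnerRegularCompactLTTop] (T : X → X)
    {l : ℕ} (A : Fin l → Set X)
    (hA : ∀ ε : ℝ, 0 < ε → ∃ (k : ℕ) (B : Fin k → Set X),
      (∀ i, MeasurableSet (B i)) ∧ μ (⋃ i, B i) > ENNReal.ofReal (1 - ε) ∧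
      ∀ i : Fin k, ∀ x ∈ B i, ∀ y ∈ B i, ∀ n : ℕ, 1 ≤ n → ham T A n x y < ε)
    {e : ℝ} (he : 0 < e) {ε : ℝ≥0∞} (hε : ε ≠ 0) :
    ∃ K, IsCompact K ∧ μ Kᶜ ≤ ε ∧ ∃ δ > 0, ∀ x ∈ K, ∀ y ∈ K, dist x y < δ →
      ∀ n : ℕ, 1 ≤ n → ham T A n x y < e := by
  obtain ⟨e₀, -, he₀, he₀ε⟩ := ENNReal.lt_iff_exists_real_btwn.1 (ENNReal.half_pos hε)
  set e' := min e e₀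
  obtain ⟨k, B, hBm, hBμ, hBham⟩ := hA e' (lt_min he (ENNReal.ofReal_pos.1 he₀))
  obtain ⟨K, hK, hμK, δ, hδ, hsep⟩ :=
    exists_isCompact_forall_dist_lt_exists_mem μ hBm (ENNReal.half_pos hε).ne'
  have hμB : μ (⋃ i, B i)ᶜ ≤ ε / 2 :=
    calc μ (⋃ i, B i)ᶜ ≤ 1 - ENNReal.ofReal (1 - e') :=
          (prob_compl_lt_one_sub_of_lt_prob hBμ (MeasurableSet.iUnion hBm)).le
      _ ≤ ENNReal.ofReal e' := by
          rw [tsub_le_iff_right, ← ENNReal.ofReal_one]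
          exact (ENNReal.ofReal_le_ofReal (by linarith)).trans ENNReal.ofReal_add_le
      _ ≤ ε / 2 := (ENNReal.ofReal_le_ofReal (min_le_right _ _)).trans he₀ε.le
  refine ⟨K, hK, ?_, δ, hδ, fun x hx y hy hxy n hn => ?_⟩
  · calc μ Kᶜ ≤ μ ((⋃ i, B i)ᶜ ∪ ((⋃ i, B i) \ K)) :=
          measure_mono fun x hx => by by_cases hxB : x ∈ ⋃ i, B i <;> simp_all
      _ ≤ ε / 2 + ε / 2 := (measure_union_le _ _).trans (add_le_add hμB hμK)
      _ = ε := ENNReal.add_halves ε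
  · obtain ⟨i, hxi, hyi⟩ := hsep x hx y hy hxy
    exact (hBham i x hxi y hyi n hn).trans_le (min_le_left _ _)

theorem exists_isCompact_div_sum_dist_iterate_lt [CompactSpace X] [MeasurableSpace X]
    [BorelSpace X] (μ : Measure X) [IsProbabilityMeasure μ] (T : X → X)
    (hyp : ∀ (l : ℕ) (A : Fin l → Set X), (∀ j, MeasurableSet (A j)) →
      Pairwise (Function.onFun Disjoint A) → (⋃ j, A j) = Set.univ →
      ∀ ε : ℝ, 0 < ε → ∃ (k : ℕ) (B : Fin k → Set X),
        (∀ i, MeasurableSet (B i)) ∧ μ (⋃ i, B i) > ENNReal.ofReal (1 - ε) ∧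
        ∀ i : Fin k, ∀ x ∈ B i, ∀ y ∈ B i, ∀ n : ℕ, 1 ≤ n → ham T A n x y < ε)
    {η : ℝ} (hη : 0 < η) {ε : ℝ≥0∞} (hε : ε ≠ 0) :
    ∃ K, IsCompact K ∧ μ Kᶜ ≤ ε ∧ ∃ δ > 0, ∀ x ∈ K, ∀ y ∈ K, dist x y < δ →
      ∀ n : ℕ, 1 ≤ n → (∑ i ∈ Finset.range n, dist (T^[i] x) (T^[i] y)) / n < η := by
  set D := diam (univ : Set X)
  have hD : ∀ x y : X, dist x y ≤ D := fun x y =>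
    dist_le_diam_of_mem isCompact_univ.isBounded (mem_univ x) (mem_univ y)
  have hD0 : 0 ≤ D := diam_nonneg
  obtain ⟨l, A, hAm, hAd, hAu, hAη⟩ :=
    exists_measurable_partition_forall_dist_lt (X := X) (by positivity : 0 < η / 3)
  obtain ⟨K, hK, hμK, δ, hδ, hham⟩ := exists_isCompact_ham_lt μ T A (hyp l A hAm hAd hAu)
    (by positivity : 0 < η / (3 * (D + 1))) hε
  have hDe : D * (η / (3 * (D + 1))) ≤ η / 3 := by
    rw [mul_div_assoc', div_le_div_iff₀ (by positivity) (by norm_num)]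
    nlinarith
  refine ⟨K, hK, hμK, δ, hδ, fun x hx y hy hxy n hn => ?_⟩
  calc _ ≤ D * ham T A n x y + η / 3 :=
        div_sum_dist_iterate_le T A (by positivity) (fun j x hx y hy => (hAη j x hx y hy).le)
          hD n x y
    _ ≤ D * (η / (3 * (D + 1))) + η / 3 := by
        gcongr
        exact (hham x hx y hy hxy n hn).le
    _ < η := by linarith

end MetricSpace

theorem stmt7_general {X : Type*} [MetricSpace X] [CompactSpace X]
    [MeasurableSpace X] [BorelSpace X]
    (T : X ≃ₜ X) (μ : Measure X) [IsProbabilityMeasure μ]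
    (hyp : ∀ (l : ℕ) (A : Fin l → Set X), (∀ j, MeasurableSet (A j)) →
      Pairwise (Function.onFun Disjoint A) → (⋃ j, A j) = Set.univ →
      ∀ ε : ℝ, 0 < ε → ∃ (k : ℕ) (B : Fin k → Set X),
        (∀ i, MeasurableSet (B i)) ∧ μ (⋃ i, B i) > ENNReal.ofReal (1 - ε) ∧
        ∀ i : Fin k, ∀ x ∈ B i, ∀ y ∈ B i, ∀ n : ℕ, 1 ≤ n →
          ham (⇑T) A n x y < ε) :
    ∀ τ : ℝ, 0 < τ → ∃ K : Set X, IsCompact K ∧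
      μ K > ENNReal.ofReal (1 - τ) ∧
      ∀ ε : ℝ, 0 < ε → ∃ δ : ℝ, 0 < δ ∧ ∀ x ∈ K, ∀ y ∈ K, dist x y < δ →
        ∀ n : ℕ, 1 ≤ n →
          (∑ i ∈ Finset.range n, dist ((⇑T)^[i] x) ((⇑T)^[i] y)) / n < ε := by
  intro τ hτ
  -- `ofReal τ` would be too weak a bound on `μ Kᶜ` when `τ > 1`
  have hτ' : 1 - ENNReal.ofReal (1 - τ) ≠ 0 :=
    (tsub_pos_of_lt (ENNReal.ofReal_lt_one.2 (by linarith))).ne'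
  obtain ⟨K, hK, hμK, hKT⟩ := exists_isCompact_measure_compl_lt_forall μ
    (fun m K => ∃ δ > 0, ∀ x ∈ K, ∀ y ∈ K, dist x y < δ → ∀ n : ℕ, 1 ≤ n →
      (∑ i ∈ Finset.range n, dist (T^[i] x) (T^[i] y)) / n < 1 / (m + 1 : ℝ))
    (fun _ _ _ hK' ⟨δ, hδ, h⟩ => ⟨δ, hδ, fun x hx y hy => h x (hK' hx) y (hK' hy)⟩)
    (fun _ _ hε => exists_isCompact_div_sum_dist_iterate_lt μ T hyp Nat.one_div_pos_of_nat hε)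
    hτ'
  refine ⟨K, hK, ?_, fun ε hε => ?_⟩
  · rw [← compl_compl K, prob_compl_eq_one_sub hK.measurableSet.compl]
    exact lt_tsub_comm.1 hμK
  · obtain ⟨m, hm⟩ := exists_nat_one_div_lt hε
    obtain ⟨δ, hδ, h⟩ := hKT m
    exact ⟨δ, hδ, fun x hx y hy hxy n hn => (h x hx y hy hxy n hn).trans hm⟩

theorem stmt7 {X : Type*} [MetricSpace X] [CompactSpace X]
    [MeasurableSpace X] [BorelSpace X]
    (T : X ≃ₜ X) (μ : Measure X) [IsProbabilityMeasure μ] [μ.Regular]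
    (hT : MeasurePreserving (⇑T) μ μ)
    (hyp : ∀ (l : ℕ) (A : Fin l → Set X), (∀ j, MeasurableSet (A j)) →
      Pairwise (Function.onFun Disjoint A) → (⋃ j, A j) = Set.univ →
      ∀ ε : ℝ, 0 < ε → ∃ (k : ℕ) (B : Fin k → Set X),
        (∀ i, MeasurableSet (B i)) ∧ μ (⋃ i, B i) > ENNReal.ofReal (1 - ε) ∧
        ∀ i : Fin k, ∀ x ∈ B i, ∀ y ∈ B i, ∀ n : ℕ, 1 ≤ n →
          ham (⇑T) A n x y < ε) :
    ∀ τ : ℝ, 0 < τ → ∃ K : Set X, IsCompact K ∧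
      μ K > ENNReal.ofReal (1 - τ) ∧
      ∀ ε : ℝ, 0 < ε → ∃ δ : ℝ, 0 < δ ∧ ∀ x ∈ K, ∀ y ∈ K, dist x y < δ →
        ∀ n : ℕ, 1 ≤ n →
          (∑ i ∈ Finset.range n, dist ((⇑T)^[i] x) ((⇑T)^[i] y)) / n < ε :=
  stmt7_general T μ hyp
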